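/- arXiv:1812.03528 — 2 statements merged into one kernel-verified Lean document; each statement's English description precedes it below -/
import Mathlib

section
/- For all ε > 0, θ > 0, and all x ∈ ℝ^m, the function Ψ*_{ε,θ}(x) := εθΨ(−x) + Ψ_ε(x) satisfies ε·((1∧θ)/μ_max)·‖x‖₁ − (1+εθ)·(m/2)·(1/μ_min) ≤ Ψ*_{ε,θ}(x) ≤ ε·((1∨θ)/μ_min)·‖x‖₁. -/
/-! ψ is squeezed between t⁺ − 1/2 and t⁺, so the summand εθψ(−t) + ψ(εt) of Ψ*_{ε,θ} lies
between ε(θt⁻ + t⁺) − (1 + εθ)/2 and ε(θt⁻ + t⁺), and θt⁻ + t⁺ lies between (1∧θ)|t| and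
(1∨θ)|t|. Dividing by μᵢ ∈ [μ_min, μ_max] and summing over the m coordinates gives both bounds. -/

open scoped BigOperators

/-- The piecewise function ψ. -/
noncomputable def psiFn (t : ℝ) : ℝ :=
  if t ≤ -1 then -(1/2)
  else if t ≤ 0 then (t+1)^3 - (1/2)*(t+1)^4 - 1/2
  else t

/-- ψ_ε(t) := ψ(εt). -/
noncomputable def psiE (ε t : ℝ) : ℝ := psiFn (ε * t)

/-- Ψ(x) := Σᵢ ψ(xᵢ)/μᵢ. -/
noncomputable def bigPsi {m : ℕ} (μ : Fin m → ℝ) (x : Fin m → ℝ) : ℝ :=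
  ∑ i, psiFn (x i) / μ i

/-- Ψ_ε(x) := Σᵢ ψ_ε(xᵢ)/μᵢ. -/
noncomputable def bigPsiE {m : ℕ} (μ : Fin m → ℝ) (ε : ℝ) (x : Fin m → ℝ) : ℝ :=
  ∑ i, psiE ε (x i) / μ i

/-- The drift b(x,u) with bᵢ(x,u) = −ρμᵢ/m − μᵢ(xᵢ − ⟨e,x⟩⁺uᵢ) − γᵢ⟨e,x⟩⁺uᵢ. -/
noncomputable def drift {m : ℕ} (ρ : ℝ) (μ γ : Fin m → ℝ) (x u : Fin m → ℝ) :
    Fin m → ℝ :=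
  fun i => -(ρ * μ i / m) - μ i * (x i - max (∑ j, x j) 0 * u i)
    - γ i * max (∑ j, x j) 0 * u i

/-- The extended generator L_u f(x) = Σᵢ λ̃ᵢ ∂²f/∂xᵢ²(x) + ⟨b(x,u), ∇f(x)⟩. -/
noncomputable def genL {m : ℕ} (lam : Fin m → ℝ) (ρ : ℝ) (μ γ : Fin m → ℝ)
    (u : Fin m → ℝ) (f : (Fin m → ℝ) → ℝ) (x : Fin m → ℝ) : ℝ :=
  ∑ i, lam i * fderiv ℝ (fun y => fderiv ℝ f y (Pi.single i 1)) x (Pi.single i 1)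
    + fderiv ℝ f x (drift ρ μ γ x u)

/-- ‖x‖₁ = Σᵢ|xᵢ|. -/
noncomputable def norm1 {m : ℕ} (x : Fin m → ℝ) : ℝ := ∑ i, |x i|

/-- ‖x⁻‖₁ = Σᵢ max(−xᵢ,0). -/
noncomputable def norm1neg {m : ℕ} (x : Fin m → ℝ) : ℝ := ∑ i, max (-(x i)) 0

lemma psiFn_le_posPart (t : ℝ) : psiFn t ≤ t⁺ := by
  unfold psiFn
  split_ifs with h₁ h₂
  · linarith [posPart_nonneg t]
  · nlinarith [posPart_nonneg t, sq_nonneg (t + 1), mul_nonneg (neg_nonneg.2 h₂) (sq_nonneg (t + 1)),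
      mul_nonneg (neg_nonneg.2 h₂) (mul_nonneg (sq_nonneg (t + 1)) (by linarith : (0:ℝ) ≤ t + 1))]
  · exact le_posPart t

lemma posPart_sub_half_le_psiFn (t : ℝ) : t⁺ - 1 / 2 ≤ psiFn t := by
  unfold psiFn
  split_ifs with h₁ h₂
  · simp [posPart_eq_zero.2 (by linarith : t ≤ 0)]
  · rw [posPart_eq_zero.2 h₂]
    nlinarith [mul_nonneg (pow_nonneg (by linarith : (0:ℝ) ≤ t + 1) 3) (by linarith : (0:ℝ) ≤ 1 - t)]
  · rw [posPart_eq_self.2 (by linarith)]; linarith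

noncomputable def psiStar (ε θ t : ℝ) : ℝ := ε * θ * psiFn (-t) + psiE ε t

lemma posPart_mul_of_nonneg {ε : ℝ} (hε : 0 ≤ ε) (t : ℝ) : (ε * t)⁺ = ε * t⁺ := by
  simp only [posPart_def, mul_max_of_nonneg _ _ hε, mul_zero]

section psiStar

variable {ε θ : ℝ} (t : ℝ)

lemma psiStar_le_mul_max_mul_abs (hε : 0 ≤ ε) (hθ : 0 ≤ θ) : psiStar ε θ t ≤ ε * max 1 θ * |t| := by
  have hneg : psiFn (-t) ≤ t⁻ := posPart_neg t ▸ psiFn_le_posPart (-t)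
  have hpos : psiFn (ε * t) ≤ ε * t⁺ := posPart_mul_of_nonneg hε t ▸ psiFn_le_posPart (ε * t)
  calc psiStar ε θ t ≤ ε * (θ * t⁻ + t⁺) := by
        unfold psiStar psiE
        nlinarith [mul_le_mul_of_nonneg_left hneg (mul_nonneg hε hθ)]
    _ ≤ ε * (max 1 θ * (t⁺ + t⁻)) := by
        gcongr
        nlinarith [le_max_left 1 θ, le_max_right 1 θ, posPart_nonneg t, negPart_nonneg t]
    _ = ε * max 1 θ * |t| := by rw [posPart_add_negPart]; ring

lemma mul_min_mul_abs_sub_le_psiStar (hε : 0 ≤ ε) (hθ : 0 ≤ θ) :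
    ε * min 1 θ * |t| - (1 + ε * θ) / 2 ≤ psiStar ε θ t := by
  have hneg : t⁻ - 1 / 2 ≤ psiFn (-t) := posPart_neg t ▸ posPart_sub_half_le_psiFn (-t)
  have hpos : ε * t⁺ - 1 / 2 ≤ psiFn (ε * t) :=
    posPart_mul_of_nonneg hε t ▸ posPart_sub_half_le_psiFn (ε * t)
  calc ε * min 1 θ * |t| - (1 + ε * θ) / 2 = ε * (min 1 θ * (t⁺ + t⁻)) - (1 + ε * θ) / 2 := by
        rw [posPart_add_negPart]; ring
    _ ≤ ε * (θ * t⁻ + t⁺) - (1 + ε * θ) / 2 := by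
        gcongr
        nlinarith [min_le_left 1 θ, min_le_right 1 θ, posPart_nonneg t, negPart_nonneg t]
    _ ≤ psiStar ε θ t := by
        unfold psiStar psiE
        nlinarith [mul_le_mul_of_nonneg_left hneg (mul_nonneg hε hθ)]

end psiStar

lemma bigPsi_neg_add_bigPsiE {m : ℕ} (μ : Fin m → ℝ) (ε θ : ℝ) (x : Fin m → ℝ) :
    ε * θ * bigPsi μ (-x) + bigPsiE μ ε x = ∑ i, psiStar ε θ (x i) / μ i := by
  simp only [bigPsi, bigPsiE, psiStar, Finset.mul_sum, ← Finset.sum_add_distrib, Pi.neg_apply,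
    add_div, mul_div_assoc]

lemma div_sub_div_le_sub_div {a c μ₀ μ μ₁ : ℝ} (ha : 0 ≤ a) (hc : 0 ≤ c) (hμ₀ : 0 < μ₀)
    (h₀ : μ₀ ≤ μ) (h₁ : μ ≤ μ₁) : a / μ₁ - c / μ₀ ≤ (a - c) / μ := by
  have hμ : 0 < μ := hμ₀.trans_le h₀
  rw [sub_div]
  gcongr

theorem stmt1_general {m : ℕ} (μ : Fin m → ℝ) (hμ : ∀ i, 0 < μ i)
    (μmax μmin : ℝ)
    (hμmax : IsGreatest (Set.range μ) μmax) (hμmin : IsLeast (Set.range μ) μmin)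
    (ε θ : ℝ) (hε : 0 < ε) (hθ : 0 < θ) (x : Fin m → ℝ) :
    ε * (min 1 θ / μmax) * norm1 x - (1 + ε * θ) * (m / 2) * (1 / μmin)
        ≤ ε * θ * bigPsi μ (-x) + bigPsiE μ ε x ∧
    ε * θ * bigPsi μ (-x) + bigPsiE μ ε x ≤ ε * (max 1 θ / μmin) * norm1 x := by
  obtain ⟨i₀, rfl⟩ := hμmin.1
  have hmin i : μ i₀ ≤ μ i := hμmin.2 ⟨i, rfl⟩
  have hmax i : μ i ≤ μmax := hμmax.2 ⟨i, rfl⟩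
  rw [bigPsi_neg_add_bigPsiE, norm1]
  simp only [Finset.mul_sum]
  constructor
  · have hsplit : ∑ i, ε * (min 1 θ / μmax) * |x i| - (1 + ε * θ) * (m / 2) * (1 / μ i₀)
        = ∑ i, (ε * min 1 θ * |x i| / μmax - (1 + ε * θ) / 2 / μ i₀) := by
      simp only [Finset.sum_sub_distrib, Finset.sum_const, Finset.card_univ, Fintype.card_fin,
        nsmul_eq_mul]
      ring_nf
    rw [hsplit]
    gcongr with i
    calc ε * min 1 θ * |x i| / μmax - (1 + ε * θ) / 2 / μ i₀
        ≤ (ε * min 1 θ * |x i| - (1 + ε * θ) / 2) / μ i :=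
          div_sub_div_le_sub_div (by positivity) (by positivity) (hμ i₀) (hmin i) (hmax i)
      _ ≤ psiStar ε θ (x i) / μ i :=
          div_le_div_of_nonneg_right (mul_min_mul_abs_sub_le_psiStar (x i) hε.le hθ.le) (hμ i).le
  · gcongr with i
    calc psiStar ε θ (x i) / μ i ≤ ε * max 1 θ * |x i| / μ i :=
          div_le_div_of_nonneg_right (psiStar_le_mul_max_mul_abs (x i) hε.le hθ.le) (hμ i).le
      _ ≤ ε * max 1 θ * |x i| / μ i₀ :=
          div_le_div_of_nonneg_left (by positivity) (hμ i₀) (hmin i)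
      _ = ε * (max 1 θ / μ i₀) * |x i| := by ring

/-- the two-sided bound
ε((1∧θ)/μ_max)‖x‖₁ − (1+εθ)(m/2)(1/μ_min) ≤ Ψ*_{ε,θ}(x) ≤ ε((1∨θ)/μ_min)‖x‖₁,
where Ψ*_{ε,θ}(x) = εθΨ(−x) + Ψ_ε(x). -/
theorem stmt1 {m : ℕ} (hm : 1 ≤ m) (μ : Fin m → ℝ) (hμ : ∀ i, 0 < μ i)
    (μmax μmin : ℝ)
    (hμmax : IsGreatest (Set.range μ) μmax) (hμmin : IsLeast (Set.range μ) μmin)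
    (ε θ : ℝ) (hε : 0 < ε) (hθ : 0 < θ) (x : Fin m → ℝ) :
    ε * (min 1 θ / μmax) * norm1 x - (1 + ε * θ) * (m / 2) * (1 / μmin)
        ≤ ε * θ * bigPsi μ (-x) + bigPsiE μ ε x ∧
    ε * θ * bigPsi μ (-x) + bigPsiE μ ε x ≤ ε * (max 1 θ / μmin) * norm1 x :=
  stmt1_general μ hμ μmax μmin hμmax hμmin ε θ hε hθ x
end

section
/- For every ε > 0 and all x ∈ ℝ^m: Σᵢ ψ_ε′(xᵢ)·xᵢ ≥ ε‖x⁺‖₁ − m/2 and −Σᵢ ψ′(−xᵢ)·xᵢ ≥ ‖x⁻‖₁ − m/2. -/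
open scoped BigOperators

/-! The derivative ψ' is explicit, `0` on `(-∞, -1]`, `3(t+1)² - 2(t+1)³` on `[-1, 0]` and `1`
on `[0, ∞)`, and satisfies the pointwise bound `ψ'(t) t ≥ t⁺ - 1/2`. Both inequalities follow by
summing this bound over the coordinates, at `t = ε xᵢ` (using `ε t⁺ ≤ (ε t)⁺`) and at `t = -xᵢ`. -/

open Set Filter Topology

lemma hasDerivAt_ite_le {g h g' h' : ℝ → ℝ} {a : ℝ}
    (hg : ∀ t, HasDerivAt g (g' t) t) (hh : ∀ t, HasDerivAt h (h' t) t)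
    (hval : g a = h a) (hderiv : g' a = h' a) (t : ℝ) :
    HasDerivAt (fun s => if s ≤ a then g s else h s) (if t ≤ a then g' t else h' t) t := by
  rcases lt_trichotomy t a with hlt | rfl | hgt
  · have hev : (fun s => if s ≤ a then g s else h s) =ᶠ[𝓝 t] g := by
      filter_upwards [Iio_mem_nhds hlt] with s hs
      rw [if_pos (le_of_lt hs)]
    simpa [hlt.le] using (hg t).congr_of_eventuallyEq hev
  · have hleft : HasDerivWithinAt (fun s => if s ≤ t then g s else h s) (g' t) (Iic t) t :=
      (hg t).hasDerivWithinAt.congr (fun s hs => if_pos hs) (if_pos le_rfl)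
    have hright : HasDerivWithinAt (fun s => if s ≤ t then g s else h s) (g' t) (Ici t) t := by
      refine (hderiv ▸ (hh t).hasDerivWithinAt).congr (fun s hs => ?_) (by simp [hval])
      rcases eq_or_lt_of_le (show t ≤ s from hs) with rfl | hts
      · simp [hval]
      · rw [if_neg (not_le.mpr hts)]
    simpa [Iic_union_Ici] using hleft.union hright
  · have hev : (fun s => if s ≤ a then g s else h s) =ᶠ[𝓝 t] h := by
      filter_upwards [Ioi_mem_nhds hgt] with s hs
      rw [if_neg (not_le.mpr hs)]
    simpa [not_le.mpr hgt] using (hh t).congr_of_eventuallyEq hev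

noncomputable def psiDeriv (t : ℝ) : ℝ :=
  if t ≤ -1 then 0 else if t ≤ 0 then 3 * (t + 1) ^ 2 - 2 * (t + 1) ^ 3 else 1

lemma hasDerivAt_psiFn_cubicPiece (t : ℝ) :
    HasDerivAt (fun s : ℝ => (s + 1) ^ 3 - (1 / 2) * (s + 1) ^ 4 - 1 / 2)
      (3 * (t + 1) ^ 2 - 2 * (t + 1) ^ 3) t := by
  have hshift : HasDerivAt (fun s : ℝ => s + 1) 1 t := (hasDerivAt_id t).add_const 1
  exact (((hshift.pow 3).sub ((hshift.pow 4).const_mul (1 / 2))).sub_const (1 / 2)).congr_deriv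
    (by norm_num; ring)

lemma hasDerivAt_psiFn (t : ℝ) : HasDerivAt psiFn (psiDeriv t) t := by
  have hinner (t : ℝ) : HasDerivAt
      (fun s : ℝ => if s ≤ 0 then (s + 1) ^ 3 - (1 / 2) * (s + 1) ^ 4 - 1 / 2 else s)
      (if t ≤ 0 then 3 * (t + 1) ^ 2 - 2 * (t + 1) ^ 3 else 1) t :=
    hasDerivAt_ite_le hasDerivAt_psiFn_cubicPiece hasDerivAt_id (by norm_num) (by norm_num) t
  exact hasDerivAt_ite_le (fun t => hasDerivAt_const t (-(1 / 2 : ℝ))) hinner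
    (by norm_num) (by norm_num) t

lemma deriv_psiE (ε t : ℝ) : deriv (psiE ε) t = psiDeriv (ε * t) * ε := by
  have hscale : HasDerivAt (fun s : ℝ => ε * s) ε t := by
    simpa using (hasDerivAt_id t).const_mul ε
  exact ((hasDerivAt_psiFn (ε * t)).comp t hscale).deriv

lemma psiDeriv_mul_self_ge (t : ℝ) : max t 0 - 1 / 2 ≤ psiDeriv t * t := by
  unfold psiDeriv
  split_ifs with hle hle'
  · simp [max_eq_right (by linarith : t ≤ 0)]
  · rw [max_eq_right hle']
    nlinarith [sq_nonneg ((t + 1) ^ 2 - 1 / 2),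
      mul_nonneg (by linarith : (0 : ℝ) ≤ t + 1) (by linarith : (0 : ℝ) ≤ -t)]
  · rw [max_eq_left (by linarith)]
    linarith

lemma mul_max_zero_le_max_mul (ε t : ℝ) : ε * max t 0 ≤ max (ε * t) 0 := by
  rcases le_total 0 ε with hε | hε
  · rw [mul_max_of_nonneg _ _ hε, mul_zero]
  · exact (mul_nonpos_of_nonpos_of_nonneg hε (le_max_right t 0)).trans (le_max_right _ _)

lemma sum_sub_half_card_le_sum {m : ℕ} (a b : Fin m → ℝ) (h : ∀ i, b i - 1 / 2 ≤ a i) :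
    ∑ i, b i - m / 2 ≤ ∑ i, a i := by
  calc ∑ i, b i - m / 2 = ∑ i, (b i - 1 / 2) := by
        rw [Finset.sum_sub_distrib, Finset.sum_const, Finset.card_univ, Fintype.card_fin,
          nsmul_eq_mul]
        ring
    _ ≤ ∑ i, a i := Finset.sum_le_sum fun i _ => h i

theorem stmt2_general {m : ℕ} (ε : ℝ) (x : Fin m → ℝ) :
    (∑ i, deriv (psiE ε) (x i) * x i ≥ ε * (∑ i, max (x i) 0) - m / 2) ∧
    (-∑ i, deriv psiFn (-(x i)) * x i ≥ (∑ i, max (-(x i)) 0) - m / 2) := by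
  constructor
  · rw [Finset.mul_sum]
    refine sum_sub_half_card_le_sum _ _ fun i => ?_
    calc ε * max (x i) 0 - 1 / 2 ≤ max (ε * x i) 0 - 1 / 2 := by
          gcongr; exact mul_max_zero_le_max_mul ε (x i)
      _ ≤ psiDeriv (ε * x i) * (ε * x i) := psiDeriv_mul_self_ge _
      _ = deriv (psiE ε) (x i) * x i := by rw [deriv_psiE]; ring
  · rw [← Finset.sum_neg_distrib]
    refine sum_sub_half_card_le_sum _ _ fun i => ?_
    simpa [(hasDerivAt_psiFn _).deriv] using psiDeriv_mul_self_ge (-(x i))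

/-- Σᵢ ψ_ε′(xᵢ)xᵢ ≥ ε‖x⁺‖₁ − m/2 and −Σᵢ ψ′(−xᵢ)xᵢ ≥ ‖x⁻‖₁ − m/2. -/
theorem stmt2 {m : ℕ} (hm : 1 ≤ m) (ε : ℝ) (hε : 0 < ε) (x : Fin m → ℝ) :
    (∑ i, deriv (psiE ε) (x i) * x i ≥ ε * (∑ i, max (x i) 0) - m / 2) ∧
    (-∑ i, deriv psiFn (-(x i)) * x i ≥ (∑ i, max (-(x i)) 0) - m / 2) :=
  stmt2_general ε x
end
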